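/- Let ε > 0, T > 0 and γ > 0. Suppose u : ℝ × ℝ² → ℝ is such that u(t,·) is four times continuously differentiable on a neighborhood of the closure of Ω for each t and ∂ₜu is continuous, and suppose that for every t ∈ [0,T] and every infinitely differentiable v : ℝ² → ℝ one has ∫_Ω ∂ₜu v dx + ε² a₁(u(t,·), v) + ∫_Ω ∇f(u(t,·)) · ∇v dx = 0. Then for every t ∈ [0,T], u satisfies the Cahn–Hilliard equation ∂ₜu + ε²Δ²u − Δf(u) = 0 at every point of Ω, and moreover ∂ₙu = 0 and ∂ₙ( −ε²Δu + f(u) ) = 0 at every point of the four open edges of ∂Ω. -/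

import Mathlib

open MeasureTheory Set

noncomputable def pdx (φ : ℝ × ℝ → ℝ) (p : ℝ × ℝ) : ℝ := fderiv ℝ φ p (1, 0)

noncomputable def pdy (φ : ℝ × ℝ → ℝ) (p : ℝ × ℝ) : ℝ := fderiv ℝ φ p (0, 1)

noncomputable def lap (φ : ℝ × ℝ → ℝ) (p : ℝ × ℝ) : ℝ := pdx (pdx φ) p + pdy (pdy φ) p

/-- The open unit square `Ω = (0,1) × (0,1)`. -/
def unitSq : Set (ℝ × ℝ) := Ioo (0:ℝ) 1 ×ˢ Ioo (0:ℝ) 1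

noncomputable def F (s : ℝ) : ℝ := (1/4) * (s^2 - 1)^2

noncomputable def fDW (s : ℝ) : ℝ := s^3 - s

noncomputable def dtu (u : ℝ → ℝ × ℝ → ℝ) (t : ℝ) (p : ℝ × ℝ) : ℝ :=
  deriv (fun s => u s p) t

def ZeroNormalDeriv (φ : ℝ × ℝ → ℝ) : Prop :=
  (∀ y ∈ Ioo (0:ℝ) 1, -pdx φ (0, y) = 0 ∧ pdx φ (1, y) = 0) ∧
  (∀ x ∈ Ioo (0:ℝ) 1, -pdy φ (x, 0) = 0 ∧ pdy φ (x, 1) = 0)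

/-- The boundary integral `∫_{∂Ω} g ds`: the sum of the four one-dimensional
arclength integrals over the edges of the unit square. -/
noncomputable def bInt (g : ℝ × ℝ → ℝ) : ℝ :=
  (∫ y in Ioo (0:ℝ) 1, g (0, y)) + (∫ y in Ioo (0:ℝ) 1, g (1, y)) +
  (∫ x in Ioo (0:ℝ) 1, g (x, 0)) + (∫ x in Ioo (0:ℝ) 1, g (x, 1))

/-- The outward normal derivative `∂ₙφ` on `∂Ω` (on `{0}×(0,1)` it is `-∂φ/∂x`,
on `{1}×(0,1)` it is `∂φ/∂x`, on `(0,1)×{0}` it is `-∂φ/∂y`, on `(0,1)×{1}` it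
is `∂φ/∂y`). -/
noncomputable def nder (φ : ℝ × ℝ → ℝ) (p : ℝ × ℝ) : ℝ :=
  if p.1 = 0 then -pdx φ p
  else if p.1 = 1 then pdx φ p
  else if p.2 = 0 then -pdy φ p
  else pdy φ p

/-- The Nitsche bilinear form
`a₁(w,v) = ∫_Ω Δw Δv − ∫_{∂Ω} Δw ∂ₙv − ∫_{∂Ω} ∂ₙw Δv + γ ∫_{∂Ω} ∂ₙw ∂ₙv`. -/
noncomputable def a1 (γ : ℝ) (w v : ℝ × ℝ → ℝ) : ℝ :=
  (∫ p in unitSq, lap w p * lap v p)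
    - bInt (fun p => lap w p * nder v p)
    - bInt (fun p => nder w p * lap v p)
    + γ * bInt (fun p => nder w p * nder v p)

/-!
Integrating the Nitsche form by parts (Green's identity on the square, for `v` against `Δu`,
`Δu` against `v` and `f(u)` against `v`) turns the variational identity into
`∫_Ω (∂ₜu + ε²Δ²u − Δf(u)) v + B(v) = 0`, where
`B(v) = ε²(γ ∫_{∂Ω} ∂ₙu ∂ₙv − ∫_{∂Ω} ∂ₙu Δv − ∫_{∂Ω} ∂ₙΔu v) + ∫_{∂Ω} ∂ₙf(u) v`.
Test functions supported in `Ω` do not see `B`, so the fundamental lemma of the calculus of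
variations gives the equation in `Ω`, and then `B(v) = 0` for every smooth `v`.
On the left edge, test functions `η(x) χ(y)` with `χ` supported in `(0,1)` and `η` vanishing
near `x = 1` isolate the edge: `η = x` near `0` gives `γ ∫ ∂ₙu χ = 0`, hence `∂ₙu = 0`, and then
`η = 1` near `0` gives `∫ (∂ₙf(u) − ε²∂ₙΔu) χ = 0`. The other edges follow from the symmetries
`(x, y) ↦ (1 − x, y)` and `(x, y) ↦ (y, x)` of the square, which commute with `Δ`, `∂ₙ` and the
boundary integral.
-/

open scoped ContDiff Topology
open Filter

lemma isOpen_unitSq : IsOpen unitSq := isOpen_Ioo.prod isOpen_Ioo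

lemma closure_unitSq : closure unitSq = Icc 0 1 ×ˢ Icc 0 1 := by
  rw [unitSq, closure_prod_eq, closure_Ioo zero_ne_one]

lemma integrableOn_unitSq {g : ℝ × ℝ → ℝ} (hg : ContinuousOn g (closure unitSq)) :
    IntegrableOn g unitSq :=
  (hg.integrableOn_compact (closure_unitSq ▸ isCompact_Icc.prod isCompact_Icc)).mono_set
    subset_closure

lemma continuousOn_closure_unitSq_of_contDiffAt {g : ℝ × ℝ → ℝ} {n : WithTop ℕ∞}
    (hg : ∀ p ∈ closure unitSq, ContDiffAt ℝ n g p) : ContinuousOn g (closure unitSq) :=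
  fun p hp => (hg p hp).continuousAt.continuousWithinAt

lemma unitSq_ae_eq_closure : unitSq =ᵐ[volume] closure unitSq := by
  refine (ae_eq_set.2 ⟨by simp [sdiff_eq_empty.2 subset_closure], ?_⟩)
  rw [← isOpen_unitSq.frontier_eq]
  exact ((convex_Ioo (0:ℝ) 1).prod (convex_Ioo 0 1)).addHaar_frontier volume

def unitSqEdges : Set (ℝ × ℝ) := ({0, 1} ×ˢ Ioo 0 1) ∪ (Ioo 0 1 ×ˢ {0, 1})

lemma unitSqEdges_subset_closure : unitSqEdges ⊆ closure unitSq := by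
  have h01 : ({0, 1} : Set ℝ) ⊆ Icc 0 1 := by simp [insert_subset_iff]
  rw [closure_unitSq]
  exact union_subset (prod_mono h01 Ioo_subset_Icc_self) (prod_mono Ioo_subset_Icc_self h01)

lemma notMem_unitSq_of_mem_unitSqEdges {p : ℝ × ℝ} (hp : p ∈ unitSqEdges) : p ∉ unitSq := by
  rintro ⟨hx, hy⟩
  rcases hp with ⟨h | h, -⟩ | ⟨-, h | h⟩ <;> simp_all [mem_singleton_iff.1 h]

lemma bInt_congr {g g' : ℝ × ℝ → ℝ} (h : EqOn g g' unitSqEdges) : bInt g = bInt g' := by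
  have hv : ∀ c ∈ ({0, 1} : Set ℝ), ∀ y ∈ Ioo (0:ℝ) 1, g (c, y) = g' (c, y) :=
    fun c hc y hy => h (Or.inl ⟨hc, hy⟩)
  have hh : ∀ c ∈ ({0, 1} : Set ℝ), ∀ x ∈ Ioo (0:ℝ) 1, g (x, c) = g' (x, c) :=
    fun c hc x hx => h (Or.inr ⟨hx, hc⟩)
  simp only [bInt]
  rw [setIntegral_congr_fun measurableSet_Ioo (hv 0 (by simp)),
    setIntegral_congr_fun measurableSet_Ioo (hv 1 (by simp)),
    setIntegral_congr_fun measurableSet_Ioo (hh 0 (by simp)),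
    setIntegral_congr_fun measurableSet_Ioo (hh 1 (by simp))]

lemma bInt_eq_zero {g : ℝ × ℝ → ℝ} (h : EqOn g 0 unitSqEdges) : bInt g = 0 := by
  rw [bInt_congr h]
  simp [bInt]

lemma bInt_eq_integral_left_edge {g : ℝ × ℝ → ℝ} (h : ∀ p ∈ unitSqEdges, p.1 ≠ 0 → g p = 0) :
    bInt g = ∫ y in Ioo (0:ℝ) 1, g (0, y) := by
  have h1 : ∫ y in Ioo (0:ℝ) 1, g (1, y) = 0 := setIntegral_eq_zero_of_forall_eq_zero
    fun y hy => h _ (Or.inl ⟨by simp, hy⟩) one_ne_zero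
  have h2 : ∀ c ∈ ({0, 1} : Set ℝ), ∫ x in Ioo (0:ℝ) 1, g (x, c) = 0 := fun c hc =>
    setIntegral_eq_zero_of_forall_eq_zero fun x hx => h _ (Or.inr ⟨hx, hc⟩) hx.1.ne'
  rw [bInt, h1, h2 0 (by simp), h2 1 (by simp)]
  ring

theorem IsOpen.eqOn_zero_of_setIntegral_mul_eq_zero {E : Type*} [NormedAddCommGroup E]
    [NormedSpace ℝ E] [FiniteDimensional ℝ E] [MeasurableSpace E] [BorelSpace E]
    {μ : Measure E} [μ.IsAddHaarMeasure] {U : Set E} (hU : IsOpen U) {G : E → ℝ}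
    (hG : ContinuousOn G U)
    (h : ∀ χ : E → ℝ, ContDiff ℝ ∞ χ → HasCompactSupport χ → tsupport χ ⊆ U →
      ∫ x in U, G x * χ x ∂μ = 0) :
    EqOn G 0 U := by
  refine Measure.eqOn_open_of_ae_eq (μ := μ) ((ae_restrict_iff' hU.measurableSet).2 ?_) hU hG
    continuousOn_const
  refine hU.ae_eq_zero_of_integral_contDiff_smul_eq_zero
    (hG.locallyIntegrableOn hU.measurableSet) fun χ hχ hχc hχU => ?_
  rw [← setIntegral_eq_integral_of_forall_compl_eq_zero fun x hx => by
    simp [image_eq_zero_of_notMem_tsupport fun h => hx (hχU h)]]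
  simpa [mul_comm] using h χ hχ hχc hχU

section Calculus

variable {φ ψ : ℝ × ℝ → ℝ} {p : ℝ × ℝ}

lemma contDiffAt_pdx {n : ℕ} (h : ContDiffAt ℝ (n + 1) φ p) : ContDiffAt ℝ n (pdx φ) p :=
  (h.fderiv_right le_rfl).clm_apply contDiffAt_const

lemma contDiffAt_pdy {n : ℕ} (h : ContDiffAt ℝ (n + 1) φ p) : ContDiffAt ℝ n (pdy φ) p :=
  (h.fderiv_right le_rfl).clm_apply contDiffAt_const

lemma contDiff_pdx {n : ℕ} (h : ContDiff ℝ (n + 1) φ) : ContDiff ℝ n (pdx φ) :=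
  contDiff_iff_contDiffAt.2 fun _ => contDiffAt_pdx h.contDiffAt

lemma contDiff_pdy {n : ℕ} (h : ContDiff ℝ (n + 1) φ) : ContDiff ℝ n (pdy φ) :=
  contDiff_iff_contDiffAt.2 fun _ => contDiffAt_pdy h.contDiffAt

lemma contDiffAt_lap {n : ℕ} (h : ContDiffAt ℝ (n + 2) φ p) : ContDiffAt ℝ n (lap φ) p :=
  (contDiffAt_pdx (contDiffAt_pdx h)).add (contDiffAt_pdy (contDiffAt_pdy h))

lemma continuousOn_lap {g : ℝ × ℝ → ℝ} (hg : ∀ p ∈ closure unitSq, ContDiffAt ℝ 2 g p) :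
    ContinuousOn (lap g) (closure unitSq) :=
  continuousOn_closure_unitSq_of_contDiffAt fun p hp => contDiffAt_lap (n := 0) (hg p hp)

lemma pdx_eventuallyEq_zero (h : φ =ᶠ[𝓝 p] 0) : pdx φ =ᶠ[𝓝 p] 0 :=
  (h.fderiv (𝕜 := ℝ)).mono fun q hq => by simp [pdx, hq]

lemma pdy_eventuallyEq_zero (h : φ =ᶠ[𝓝 p] 0) : pdy φ =ᶠ[𝓝 p] 0 :=
  (h.fderiv (𝕜 := ℝ)).mono fun q hq => by simp [pdy, hq]

lemma lap_eq_zero_of_eventuallyEq_zero (h : φ =ᶠ[𝓝 p] 0) : lap φ p = 0 := by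
  simp [lap, (pdx_eventuallyEq_zero (pdx_eventuallyEq_zero h)).eq_of_nhds,
    (pdy_eventuallyEq_zero (pdy_eventuallyEq_zero h)).eq_of_nhds]

lemma nder_eq_zero_of_eventuallyEq_zero (h : φ =ᶠ[𝓝 p] 0) : nder φ p = 0 := by
  unfold nder
  split_ifs <;>
    simp [(pdx_eventuallyEq_zero h).eq_of_nhds, (pdy_eventuallyEq_zero h).eq_of_nhds]

lemma pdx_mul (hφ : DifferentiableAt ℝ φ p) (hψ : DifferentiableAt ℝ ψ p) :
    pdx (fun q => φ q * ψ q) p = pdx φ p * ψ p + φ p * pdx ψ p := by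
  simp only [pdx, fderiv_fun_mul hφ hψ, add_apply, smul_apply, smul_eq_mul]
  ring

lemma pdy_mul (hφ : DifferentiableAt ℝ φ p) (hψ : DifferentiableAt ℝ ψ p) :
    pdy (fun q => φ q * ψ q) p = pdy φ p * ψ p + φ p * pdy ψ p := by
  simp only [pdy, fderiv_fun_mul hφ hψ, add_apply, smul_apply, smul_eq_mul]
  ring

lemma pdx_pdx_mul_add_pdy_pdy_mul (hφx : DifferentiableAt ℝ (pdx φ) p)
    (hφy : DifferentiableAt ℝ (pdy φ) p) (hψ : DifferentiableAt ℝ ψ p) :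
    pdx (fun q => pdx φ q * ψ q) p + pdy (fun q => pdy φ q * ψ q) p =
      (pdx φ p * pdx ψ p + pdy φ p * pdy ψ p) + lap φ p * ψ p := by
  rw [pdx_mul hφx hψ, pdy_mul hφy hψ, lap]
  ring

lemma nder_const_mul_add (c : ℝ) (hφ : DifferentiableAt ℝ φ p) (hψ : DifferentiableAt ℝ ψ p) :
    nder (fun q => c * φ q + ψ q) p = c * nder φ p + nder ψ p := by
  have hf : fderiv ℝ (fun q => c * φ q + ψ q) p = c • fderiv ℝ φ p + fderiv ℝ ψ p := by
    rw [fderiv_fun_add (hφ.const_mul c) hψ, fderiv_const_mul hφ]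
  unfold nder pdx pdy
  split_ifs <;> simp only [hf, add_apply, smul_apply, smul_eq_mul, neg_add_rev, mul_neg] <;> ring

end Calculus

section Tensor

variable {a b : ℝ → ℝ} {p : ℝ × ℝ}

lemma hasFDerivAt_tensor (ha : DifferentiableAt ℝ a p.1) (hb : DifferentiableAt ℝ b p.2) :
    HasFDerivAt (fun q : ℝ × ℝ => a q.1 * b q.2)
      (a p.1 • deriv b p.2 • ContinuousLinearMap.snd ℝ ℝ ℝ +
        b p.2 • deriv a p.1 • ContinuousLinearMap.fst ℝ ℝ ℝ) p :=
  (ha.hasDerivAt.comp_hasFDerivAt p hasFDerivAt_fst).mul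
    (hb.hasDerivAt.comp_hasFDerivAt p hasFDerivAt_snd)

lemma pdx_tensor (ha : Differentiable ℝ a) (hb : Differentiable ℝ b) :
    pdx (fun q : ℝ × ℝ => a q.1 * b q.2) = fun q => deriv a q.1 * b q.2 := by
  ext q
  simp [pdx, (hasFDerivAt_tensor (ha q.1) (hb q.2)).fderiv, mul_comm]

lemma pdy_tensor (ha : Differentiable ℝ a) (hb : Differentiable ℝ b) :
    pdy (fun q : ℝ × ℝ => a q.1 * b q.2) = fun q => a q.1 * deriv b q.2 := by
  ext q
  simp [pdy, (hasFDerivAt_tensor (ha q.1) (hb q.2)).fderiv]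

lemma lap_tensor (ha : ContDiff ℝ 2 a) (hb : ContDiff ℝ 2 b) :
    lap (fun q : ℝ × ℝ => a q.1 * b q.2) =
      fun q => deriv (deriv a) q.1 * b q.2 + a q.1 * deriv (deriv b) q.2 := by
  have hda := ((contDiff_succ_iff_deriv (n := 1)).1 ha).2.2.differentiable one_ne_zero
  have hdb := ((contDiff_succ_iff_deriv (n := 1)).1 hb).2.2.differentiable one_ne_zero
  have ha' := ha.differentiable two_ne_zero
  have hb' := hb.differentiable two_ne_zero
  ext q
  rw [lap, pdx_tensor ha' hb', pdy_tensor ha' hb', pdx_tensor hda hb', pdy_tensor ha' hdb]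

end Tensor

section Green

theorem setIntegral_pdx_add_pdy_unitSq {F G : ℝ × ℝ → ℝ}
    (hF : ∀ p ∈ closure unitSq, ContDiffAt ℝ 1 F p)
    (hG : ∀ p ∈ closure unitSq, ContDiffAt ℝ 1 G p) :
    ∫ p in unitSq, (pdx F p + pdy G p) =
      (∫ y in Ioo (0:ℝ) 1, F (1, y)) - (∫ y in Ioo (0:ℝ) 1, F (0, y)) +
        (∫ x in Ioo (0:ℝ) 1, G (x, 1)) - ∫ x in Ioo (0:ℝ) 1, G (x, 0) := by
  have hIcc : Icc ((0:ℝ), (0:ℝ)) (1, 1) = closure unitSq := by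
    rw [closure_unitSq, Icc_prod_eq]
  have hdiv : ContinuousOn (fun p => pdx F p + pdy G p) (closure unitSq) :=
    continuousOn_closure_unitSq_of_contDiffAt (n := 0) fun p hp =>
      (contDiffAt_pdx (n := 0) (by simpa using hF p hp)).add
        (contDiffAt_pdy (n := 0) (by simpa using hG p hp))
  have key := integral_divergence_prod_Icc_of_hasFDerivAt_off_countable_of_le F G
    (fderiv ℝ F) (fderiv ℝ G) (0, 0) (1, 1) (by simp) ∅ countable_empty
    (hIcc ▸ continuousOn_closure_unitSq_of_contDiffAt hF)
    (hIcc ▸ continuousOn_closure_unitSq_of_contDiffAt hG)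
    (fun p hp => ((hF p (subset_closure hp.1)).differentiableAt one_ne_zero).hasFDerivAt)
    (fun p hp => ((hG p (subset_closure hp.1)).differentiableAt one_ne_zero).hasFDerivAt)
    ((hIcc ▸ hdiv).integrableOn_compact isCompact_Icc)
  simp only [intervalIntegral.integral_of_le zero_le_one, integral_Ioc_eq_integral_Ioo,
    hIcc] at key
  rw [setIntegral_congr_set unitSq_ae_eq_closure]
  exact key.trans (by ring)

theorem setIntegral_grad_mul_add_setIntegral_lap_mul {φ ψ : ℝ × ℝ → ℝ}
    (hφ : ∀ p ∈ closure unitSq, ContDiffAt ℝ 2 φ p)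
    (hψ : ∀ p ∈ closure unitSq, ContDiffAt ℝ 1 ψ p) :
    (∫ p in unitSq, (pdx φ p * pdx ψ p + pdy φ p * pdy ψ p)) + (∫ p in unitSq, lap φ p * ψ p) =
      bInt (fun p => nder φ p * ψ p) := by
  have hφx : ∀ p ∈ closure unitSq, ContDiffAt ℝ 1 (pdx φ) p := fun p hp => contDiffAt_pdx (hφ p hp)
  have hφy : ∀ p ∈ closure unitSq, ContDiffAt ℝ 1 (pdy φ) p := fun p hp => contDiffAt_pdy (hφ p hp)
  have hψx : ∀ p ∈ closure unitSq, ContDiffAt ℝ 0 (pdx ψ) p := fun p hp => contDiffAt_pdx (hψ p hp)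
  have hψy : ∀ p ∈ closure unitSq, ContDiffAt ℝ 0 (pdy ψ) p := fun p hp => contDiffAt_pdy (hψ p hp)
  have hφxx : ∀ p ∈ closure unitSq, ContDiffAt ℝ 0 (lap φ) p := fun p hp => contDiffAt_lap (hφ p hp)
  have hgrad : IntegrableOn (fun p => pdx φ p * pdx ψ p + pdy φ p * pdy ψ p) unitSq :=
    integrableOn_unitSq (continuousOn_closure_unitSq_of_contDiffAt fun p hp =>
      ((hφx p hp).of_le zero_le_one).mul (hψx p hp) |>.add
        (((hφy p hp).of_le zero_le_one).mul (hψy p hp)))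
  have hlap : IntegrableOn (fun p => lap φ p * ψ p) unitSq :=
    integrableOn_unitSq (continuousOn_closure_unitSq_of_contDiffAt fun p hp =>
      (hφxx p hp).mul ((hψ p hp).of_le zero_le_one))
  have hprod : EqOn (fun p => (pdx φ p * pdx ψ p + pdy φ p * pdy ψ p) + lap φ p * ψ p)
      (fun p => pdx (fun q => pdx φ q * ψ q) p + pdy (fun q => pdy φ q * ψ q) p) unitSq :=
    fun p hp => by
      have hd := fun (g : ℝ × ℝ → ℝ) (hg : ∀ p ∈ closure unitSq, ContDiffAt ℝ 1 g p) =>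
        (hg p (subset_closure hp)).differentiableAt one_ne_zero
      exact (pdx_pdx_mul_add_pdy_pdy_mul (hd _ hφx) (hd _ hφy) (hd _ hψ)).symm
  rw [← integral_add hgrad hlap, setIntegral_congr_fun isOpen_unitSq.measurableSet hprod,
    setIntegral_pdx_add_pdy_unitSq (fun p hp => (hφx p hp).mul (hψ p hp))
      (fun p hp => (hφy p hp).mul (hψ p hp)), bInt]
  have hx0 : ∫ x in Ioo (0:ℝ) 1, nder φ (x, 0) * ψ (x, 0) =
      ∫ x in Ioo (0:ℝ) 1, -(pdy φ (x, 0) * ψ (x, 0)) :=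
    setIntegral_congr_fun measurableSet_Ioo fun x hx => by simp [nder, hx.1.ne', hx.2.ne]
  have hx1 : ∫ x in Ioo (0:ℝ) 1, nder φ (x, 1) * ψ (x, 1) =
      ∫ x in Ioo (0:ℝ) 1, pdy φ (x, 1) * ψ (x, 1) :=
    setIntegral_congr_fun measurableSet_Ioo fun x hx => by simp [nder, hx.1.ne', hx.2.ne]
  rw [hx0, hx1, integral_neg]
  simp only [nder, ↓reduceIte, neg_mul, integral_neg, one_ne_zero]
  ring

end Green

/-- The boundary terms of `a1` after integration by parts, with `L`, `N`, `M` standing for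
`∂ₙΔu`, `∂ₙu` and `∂ₙf(u)`. -/
noncomputable def nitscheBoundaryForm (ε γ : ℝ) (L N M v : ℝ × ℝ → ℝ) : ℝ :=
  ε ^ 2 * (γ * bInt (fun p => N p * nder v p) - bInt (fun p => N p * lap v p) -
    bInt (fun p => L p * v p)) + bInt (fun p => M p * v p)

section NitscheForm

variable {ε γ : ℝ}

theorem setIntegral_mul_add_a1_add_grad_eq {ρ w g v : ℝ × ℝ → ℝ}
    (hρ : ContinuousOn ρ (closure unitSq)) (hw : ∀ p ∈ closure unitSq, ContDiffAt ℝ 4 w p)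
    (hg : ∀ p ∈ closure unitSq, ContDiffAt ℝ 2 g p) (hv : ContDiff ℝ 2 v) :
    (∫ p in unitSq, ρ p * v p) + ε ^ 2 * a1 γ w v +
        (∫ p in unitSq, (pdx g p * pdx v p + pdy g p * pdy v p)) =
      (∫ p in unitSq, (ρ p + ε ^ 2 * lap (lap w) p - lap g p) * v p) +
        nitscheBoundaryForm ε γ (nder (lap w)) (nder w) (nder g) v := by
  have hΔw : ∀ p ∈ closure unitSq, ContDiffAt ℝ 2 (lap w) p := fun p hp => contDiffAt_lap (hw p hp)
  have hv1 : ∀ p ∈ closure unitSq, ContDiffAt ℝ 1 v p := fun p _ =>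
    hv.contDiffAt.of_le one_le_two
  have green₁ := setIntegral_grad_mul_add_setIntegral_lap_mul (fun p _ => hv.contDiffAt)
    fun p hp => (hΔw p hp).of_le one_le_two
  have green₂ := setIntegral_grad_mul_add_setIntegral_lap_mul hΔw hv1
  have green₃ := setIntegral_grad_mul_add_setIntegral_lap_mul hg hv1
  have hcomm₁ : ∫ p in unitSq, lap v p * lap w p = ∫ p in unitSq, lap w p * lap v p :=
    setIntegral_congr_fun isOpen_unitSq.measurableSet fun p _ => mul_comm _ _
  have hcomm₂ : ∫ p in unitSq, (pdx v p * pdx (lap w) p + pdy v p * pdy (lap w) p) =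
      ∫ p in unitSq, (pdx (lap w) p * pdx v p + pdy (lap w) p * pdy v p) :=
    setIntegral_congr_fun isOpen_unitSq.measurableSet fun p _ => by ring
  have hcomm₃ : bInt (fun p => nder v p * lap w p) = bInt (fun p => lap w p * nder v p) := by
    simp only [mul_comm]
  have hint : ∀ f : ℝ × ℝ → ℝ, ContinuousOn f (closure unitSq) →
      IntegrableOn (fun p => f p * v p) unitSq := fun f hf =>
    integrableOn_unitSq (hf.mul hv.continuous.continuousOn)
  have hsplit : ∫ p in unitSq, (ρ p + ε ^ 2 * lap (lap w) p - lap g p) * v p =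
      (∫ p in unitSq, ρ p * v p) + ε ^ 2 * (∫ p in unitSq, lap (lap w) p * v p) -
        ∫ p in unitSq, lap g p * v p := by
    have h₁ := hint ρ hρ
    have h₂ := (hint _ (continuousOn_lap hΔw)).const_mul (ε ^ 2)
    rw [setIntegral_congr_fun isOpen_unitSq.measurableSet (g := fun p =>
        (ρ p * v p + ε ^ 2 * (lap (lap w) p * v p)) - lap g p * v p) fun p _ => by ring,
      integral_sub (Integrable.fun_add h₁ h₂)
        (hint _ (continuousOn_lap hg)), integral_add h₁ h₂, integral_const_mul]
  rw [hcomm₁, hcomm₂, hcomm₃] at green₁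
  rw [hsplit, a1, nitscheBoundaryForm]
  linear_combination ε ^ 2 * (green₁ - green₂) + green₃

lemma nitscheBoundaryForm_eq_zero_of_eventuallyEq_zero {L N M v : ℝ × ℝ → ℝ}
    (hv : ∀ p ∈ unitSqEdges, v =ᶠ[𝓝 p] 0) : nitscheBoundaryForm ε γ L N M v = 0 := by
  rw [nitscheBoundaryForm,
    bInt_eq_zero fun p hp => by simp [nder_eq_zero_of_eventuallyEq_zero (hv p hp)],
    bInt_eq_zero fun p hp => by simp [lap_eq_zero_of_eventuallyEq_zero (hv p hp)],
    bInt_eq_zero fun p hp => by simp [(hv p hp).eq_of_nhds],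
    bInt_eq_zero fun p hp => by simp [(hv p hp).eq_of_nhds]]
  ring

theorem eqOn_zero_and_nitscheBoundaryForm_eq_zero {R L N M : ℝ × ℝ → ℝ}
    (hR : ContinuousOn R unitSq)
    (h : ∀ v, ContDiff ℝ ∞ v → (∫ p in unitSq, R p * v p) + nitscheBoundaryForm ε γ L N M v = 0) :
    EqOn R 0 unitSq ∧ ∀ v, ContDiff ℝ ∞ v → nitscheBoundaryForm ε γ L N M v = 0 := by
  have hR0 : EqOn R 0 unitSq :=
    isOpen_unitSq.eqOn_zero_of_setIntegral_mul_eq_zero hR fun χ hχ _ hχU => by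
      have hbd : nitscheBoundaryForm ε γ L N M χ = 0 :=
        nitscheBoundaryForm_eq_zero_of_eventuallyEq_zero fun p hp =>
          notMem_tsupport_iff_eventuallyEq.1 fun h => notMem_unitSq_of_mem_unitSqEdges hp (hχU h)
      simpa [hbd] using h χ hχ
  refine ⟨hR0, fun v hv => ?_⟩
  simpa [setIntegral_eq_zero_of_forall_eq_zero fun p hp => mul_eq_zero_of_left (hR0 hp) (v p)]
    using h v hv

end NitscheForm

section LeftEdge

variable {ε γ : ℝ} {L N M : ℝ × ℝ → ℝ}

lemma exists_contDiff_eventuallyEq_one_zero :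
    ∃ ρ : ℝ → ℝ, ContDiff ℝ ∞ ρ ∧ ρ =ᶠ[𝓝 0] 1 ∧ ρ =ᶠ[𝓝 1] 0 := by
  let f : ContDiffBump (0:ℝ) := ⟨1 / 4, 1 / 2, by norm_num, by norm_num⟩
  refine ⟨f, f.contDiff, ?_, ?_⟩
  · filter_upwards [Metric.closedBall_mem_nhds (0:ℝ) (by norm_num : (0:ℝ) < 1 / 4)] with x hx
    exact f.one_of_mem_closedBall hx
  · filter_upwards [Ioi_mem_nhds (by norm_num : (1 / 2 : ℝ) < 1)] with x hx
    have hx : (1 / 2 : ℝ) < x := hx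
    exact f.zero_of_le_dist (by rw [Real.dist_0_eq_abs, abs_of_pos (by linarith)]; exact hx.le)

lemma tensor_eventuallyEq_zero {η χ : ℝ → ℝ} (hη : η =ᶠ[𝓝 1] 0) (hχ : tsupport χ ⊆ Ioo 0 1)
    {p : ℝ × ℝ} (hp : p ∈ unitSqEdges) (hp0 : p.1 ≠ 0) :
    (fun q : ℝ × ℝ => η q.1 * χ q.2) =ᶠ[𝓝 p] 0 := by
  have hχ' : ∀ c ∈ ({0, 1} : Set ℝ), χ =ᶠ[𝓝 c] 0 := fun c hc =>
    notMem_tsupport_iff_eventuallyEq.1 fun h => by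
      rcases hc with rfl | rfl <;> simpa using hχ h
  rcases hp with ⟨h | h, -⟩ | ⟨-, hc⟩
  · exact absurd h hp0
  · filter_upwards [(mem_singleton_iff.1 h ▸ hη).comp_tendsto continuousAt_fst] with q hq
    simp [show η q.1 = 0 from hq]
  · filter_upwards [(hχ' _ hc).comp_tendsto continuousAt_snd] with q hq
    simp [show χ q.2 = 0 from hq]

lemma nitscheBoundaryForm_tensor {η χ : ℝ → ℝ} {a b : ℝ} (hη : ContDiff ℝ 2 η)
    (hχ : ContDiff ℝ 2 χ) (hη0 : η =ᶠ[𝓝 0] fun x => a + b * x) (hη1 : η =ᶠ[𝓝 1] 0)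
    (hχU : tsupport χ ⊆ Ioo 0 1) :
    nitscheBoundaryForm ε γ L N M (fun q => η q.1 * χ q.2) =
      ε ^ 2 * (-(γ * b) * (∫ y in Ioo (0:ℝ) 1, N (0, y) * χ y) -
        a * (∫ y in Ioo (0:ℝ) 1, N (0, y) * deriv (deriv χ) y) -
        a * ∫ y in Ioo (0:ℝ) 1, L (0, y) * χ y) + a * ∫ y in Ioo (0:ℝ) 1, M (0, y) * χ y := by
  have hv := fun p hp hp0 => tensor_eventuallyEq_zero hη1 hχU (p := p) hp hp0
  have hη₀ : η 0 = a := by simpa using hη0.eq_of_nhds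
  have hη₁ : deriv η 0 = b := by rw [hη0.deriv_eq]; simp
  have hη₂ : deriv (deriv η) 0 = 0 := by rw [hη0.deriv.deriv_eq]; simp
  rw [nitscheBoundaryForm,
    bInt_eq_integral_left_edge fun p hp hp0 => by
      simp [nder_eq_zero_of_eventuallyEq_zero (hv p hp hp0)],
    bInt_eq_integral_left_edge fun p hp hp0 => by
      simp [lap_eq_zero_of_eventuallyEq_zero (hv p hp hp0)],
    bInt_eq_integral_left_edge fun p hp hp0 => by simp [(hv p hp hp0).eq_of_nhds],
    bInt_eq_integral_left_edge fun p hp hp0 => by simp [(hv p hp hp0).eq_of_nhds]]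
  have hnder : ∀ y, nder (fun q => η q.1 * χ q.2) (0, y) = -(b * χ y) := fun y => by
    simp [nder, pdx_tensor (hη.differentiable two_ne_zero) (hχ.differentiable two_ne_zero), hη₁]
  simp only [hnder, lap_tensor hη hχ, hη₀, hη₂, zero_mul, zero_add, mul_neg, mul_left_comm _ a,
    mul_left_comm _ b, integral_neg, integral_const_mul]
  ring

theorem left_edge_conditions_of_nitscheBoundaryForm_eq_zero (hε : ε ≠ 0) (hγ : γ ≠ 0)
    (hL : ContinuousOn (fun y => L (0, y)) (Icc 0 1))
    (hN : ContinuousOn (fun y => N (0, y)) (Icc 0 1))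
    (hM : ContinuousOn (fun y => M (0, y)) (Icc 0 1))
    (hform : ∀ v, ContDiff ℝ ∞ v → nitscheBoundaryForm ε γ L N M v = 0) :
    ∀ y ∈ Ioo (0:ℝ) 1, N (0, y) = 0 ∧ M (0, y) = ε ^ 2 * L (0, y) := by
  obtain ⟨ρ, hρ, hρ0, hρ1⟩ := exists_contDiff_eventuallyEq_one_zero
  have htest : ∀ η χ : ℝ → ℝ, ContDiff ℝ ∞ η → ContDiff ℝ ∞ χ →
      ContDiff ℝ ∞ (fun q : ℝ × ℝ => η q.1 * χ q.2) := fun η χ hη hχ =>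
    (hη.comp contDiff_fst).mul (hχ.comp contDiff_snd)
  have hN0 : EqOn (fun y => N (0, y)) 0 (Ioo 0 1) := by
    refine isOpen_Ioo.eqOn_zero_of_setIntegral_mul_eq_zero (μ := volume)
      (hN.mono Ioo_subset_Icc_self) fun χ hχ _ hχU => ?_
    have hη := contDiff_id.mul hρ
    have h := hform _ (htest _ χ hη hχ)
    rw [nitscheBoundaryForm_tensor (a := 0) (b := 1) (hη.of_le (by norm_cast))
      (hχ.of_le (by norm_cast))
      (by filter_upwards [hρ0] with x hx; simp [hx])
      (by filter_upwards [hρ1] with x hx; simp [hx]) hχU] at h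
    simpa [hε, hγ] using h
  refine fun y hy => ⟨hN0 hy, ?_⟩
  have hML : EqOn (fun y => M (0, y) - ε ^ 2 * L (0, y)) 0 (Ioo 0 1) := by
    refine isOpen_Ioo.eqOn_zero_of_setIntegral_mul_eq_zero (μ := volume)
      ((hM.sub (continuousOn_const.mul hL)).mono Ioo_subset_Icc_self) fun χ hχ _ hχU => ?_
    have h := hform _ (htest _ χ hρ hχ)
    rw [nitscheBoundaryForm_tensor (a := 1) (b := 0) (hρ.of_le (by norm_cast))
      (hχ.of_le (by norm_cast))
      (by filter_upwards [hρ0] with x hx; simp [hx]) hρ1 hχU] at h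
    have hNχ : ∫ y in Ioo (0:ℝ) 1, N (0, y) * deriv (deriv χ) y = 0 :=
      setIntegral_eq_zero_of_forall_eq_zero fun y hy => by simp [show N (0, y) = 0 from hN0 hy]
    have hint : ∀ g : ℝ → ℝ, ContinuousOn g (Icc 0 1) →
        IntegrableOn (fun y => g y * χ y) (Ioo 0 1) := fun g hg =>
      ((hg.mul hχ.continuous.continuousOn).integrableOn_Icc).mono_set Ioo_subset_Icc_self
    rw [setIntegral_congr_fun measurableSet_Ioo (g := fun y => M (0, y) * χ y -
        ε ^ 2 * (L (0, y) * χ y)) fun y _ => by ring,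
      integral_sub (hint _ hM) ((hint _ hL).const_mul _), integral_const_mul]
    simp only [hNχ] at h
    linarith
  simpa [sub_eq_zero] using hML hy

end LeftEdge

section Symmetry

variable {φ : ℝ × ℝ → ℝ} {p : ℝ × ℝ} {σ : ℝ × ℝ → ℝ × ℝ} {ε γ : ℝ}
  {Λ w μ : ℝ × ℝ → ℝ}

def reflectX (p : ℝ × ℝ) : ℝ × ℝ := (1 - p.1, p.2)

lemma fderiv_comp_swap_apply (hφ : DifferentiableAt ℝ φ p.swap) (v : ℝ × ℝ) :
    fderiv ℝ (φ ∘ Prod.swap) p v = fderiv ℝ φ p.swap v.swap := by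
  have hs : HasFDerivAt Prod.swap
      ((ContinuousLinearMap.snd ℝ ℝ ℝ).prod (ContinuousLinearMap.fst ℝ ℝ ℝ)) p :=
    hasFDerivAt_snd.prodMk hasFDerivAt_fst
  simp [(hφ.hasFDerivAt.comp p hs).fderiv, Prod.swap]

lemma fderiv_comp_reflectX_apply (hφ : DifferentiableAt ℝ φ (reflectX p)) (v : ℝ × ℝ) :
    fderiv ℝ (φ ∘ reflectX) p v = fderiv ℝ φ (reflectX p) (-v.1, v.2) := by
  have hr : HasFDerivAt reflectX
      ((-ContinuousLinearMap.fst ℝ ℝ ℝ).prod (ContinuousLinearMap.snd ℝ ℝ ℝ)) p :=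
    ((hasFDerivAt_const 1 p).sub hasFDerivAt_fst).prodMk hasFDerivAt_snd |>.congr_fderiv
      (by ext <;> simp)
  simp [(hφ.hasFDerivAt.comp p hr).fderiv]

lemma pdx_comp_swap (hφ : DifferentiableAt ℝ φ p.swap) : pdx (φ ∘ Prod.swap) p = pdy φ p.swap := by
  simp [pdx, pdy, fderiv_comp_swap_apply hφ]

lemma pdy_comp_swap (hφ : DifferentiableAt ℝ φ p.swap) : pdy (φ ∘ Prod.swap) p = pdx φ p.swap := by
  simp [pdx, pdy, fderiv_comp_swap_apply hφ]

lemma pdx_comp_reflectX (hφ : DifferentiableAt ℝ φ (reflectX p)) :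
    pdx (φ ∘ reflectX) p = -pdx φ (reflectX p) := by
  simp [pdx, fderiv_comp_reflectX_apply hφ, ← map_neg]

lemma pdy_comp_reflectX (hφ : DifferentiableAt ℝ φ (reflectX p)) :
    pdy (φ ∘ reflectX) p = pdy φ (reflectX p) := by
  simp [pdy, fderiv_comp_reflectX_apply hφ]

lemma setIntegral_Ioo_comp_one_sub (h : ℝ → ℝ) :
    ∫ x in Ioo (0:ℝ) 1, h (1 - x) = ∫ x in Ioo (0:ℝ) 1, h x := by
  simp only [← integral_Ioc_eq_integral_Ioo, ← intervalIntegral.integral_of_le zero_le_one]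
  simp

structure IsSquareSymmetry (σ : ℝ × ℝ → ℝ × ℝ) : Prop where
  involutive : Function.Involutive σ
  contDiff : ContDiff ℝ ∞ σ
  mapsTo_closure : MapsTo σ (closure unitSq) (closure unitSq)
  mapsTo_edges : MapsTo σ unitSqEdges unitSqEdges
  bInt_comp (g : ℝ × ℝ → ℝ) : bInt (g ∘ σ) = bInt g
  nder_comp (φ : ℝ × ℝ → ℝ) {p : ℝ × ℝ} :
    p ∈ unitSqEdges → DifferentiableAt ℝ φ (σ p) → nder (φ ∘ σ) p = nder φ (σ p)
  lap_comp (φ : ℝ × ℝ → ℝ) : ContDiff ℝ 2 φ → lap (φ ∘ σ) = lap φ ∘ σ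

lemma isSquareSymmetry_swap : IsSquareSymmetry Prod.swap where
  involutive := Prod.swap_swap
  contDiff := contDiff_snd.prodMk contDiff_fst
  mapsTo_closure := by
    rw [closure_unitSq]
    exact fun p hp => ⟨hp.2, hp.1⟩
  mapsTo_edges := by
    rintro p (⟨h₁, h₂⟩ | ⟨h₁, h₂⟩)
    exacts [Or.inr ⟨h₂, h₁⟩, Or.inl ⟨h₂, h₁⟩]
  bInt_comp g := by
    simp only [bInt, Function.comp, Prod.swap]
    ring
  nder_comp φ p hp hφ := by
    obtain ⟨x, y⟩ := p
    rcases hp with ⟨hx, hy⟩ | ⟨hx, hy⟩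
    · rcases hx with rfl | rfl <;> simp [nder, pdx_comp_swap hφ, hy.1.ne', hy.2.ne]
    · rcases hy with rfl | rfl <;> simp [nder, pdy_comp_swap hφ, hx.1.ne', hx.2.ne]
  lap_comp φ hφ := by
    have hd := hφ.differentiable two_ne_zero
    have hdx := (contDiff_pdx (n := 1) hφ).differentiable one_ne_zero
    have hdy := (contDiff_pdy (n := 1) hφ).differentiable one_ne_zero
    have hx : pdx (φ ∘ Prod.swap) = pdy φ ∘ Prod.swap := funext fun p => pdx_comp_swap (hd _)
    have hy : pdy (φ ∘ Prod.swap) = pdx φ ∘ Prod.swap := funext fun p => pdy_comp_swap (hd _)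
    ext p
    rw [lap, hx, hy, pdx_comp_swap (hdy _), pdy_comp_swap (hdx _), Function.comp_apply, lap,
      add_comm]

lemma isSquareSymmetry_reflectX : IsSquareSymmetry reflectX where
  involutive p := by simp [reflectX]
  contDiff := (contDiff_const.sub contDiff_fst).prodMk contDiff_snd
  mapsTo_closure := by
    rw [closure_unitSq]
    exact fun p ⟨⟨h₁, h₂⟩, hp⟩ => ⟨⟨by simp [reflectX, h₂], by simp [reflectX, h₁]⟩, hp⟩
  mapsTo_edges := by
    rintro p (⟨h | h, hp⟩ | ⟨⟨h₁, h₂⟩, hp⟩)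
    · exact Or.inl ⟨by simp [reflectX, h], hp⟩
    · exact Or.inl ⟨by simp [reflectX, mem_singleton_iff.1 h], hp⟩
    · exact Or.inr ⟨⟨by simp [reflectX, h₂], by simp [reflectX, h₁]⟩, hp⟩
  bInt_comp g := by
    have h₀ := setIntegral_Ioo_comp_one_sub fun x => g (x, 0)
    have h₁ := setIntegral_Ioo_comp_one_sub fun x => g (x, 1)
    simp only [bInt, Function.comp, reflectX, sub_zero, sub_self] at h₀ h₁ ⊢
    rw [h₀, h₁]
    ring
  nder_comp φ p hp hφ := by
    obtain ⟨x, y⟩ := p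
    rcases hp with ⟨hx, -⟩ | ⟨hx, hy⟩
    · rcases hx with rfl | rfl <;> simp [nder, pdx_comp_reflectX hφ, reflectX]
    · have h₀ : 1 - x ≠ 0 := by linarith [hx.2]
      have h₁ : 1 - x ≠ 1 := by linarith [hx.1]
      rcases hy with rfl | rfl <;>
        simp [nder, pdy_comp_reflectX hφ, reflectX, hx.1.ne', hx.2.ne, h₀, h₁]
  lap_comp φ hφ := by
    have hd := hφ.differentiable two_ne_zero
    have hdx := (contDiff_pdx (n := 1) hφ).differentiable one_ne_zero
    have hdy := (contDiff_pdy (n := 1) hφ).differentiable one_ne_zero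
    have hx : pdx (φ ∘ reflectX) = -(pdx φ ∘ reflectX) :=
      funext fun p => pdx_comp_reflectX (hd _)
    have hy : pdy (φ ∘ reflectX) = pdy φ ∘ reflectX := funext fun p => pdy_comp_reflectX (hd _)
    ext p
    have hneg : pdx (-(pdx φ ∘ reflectX)) p = -pdx (pdx φ ∘ reflectX) p := by
      simp [pdx, fderiv_neg]
    rw [lap, hx, hy, hneg, pdx_comp_reflectX (hdx _), pdy_comp_reflectX (hdy _),
      Function.comp_apply, lap, neg_neg]

lemma IsSquareSymmetry.contDiffAt_comp (hσ : IsSquareSymmetry σ) {f : ℝ × ℝ → ℝ}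
    (hf : ∀ p ∈ closure unitSq, ContDiffAt ℝ 1 f p) :
    ∀ p ∈ closure unitSq, ContDiffAt ℝ 1 (f ∘ σ) p := fun p hp =>
  (hf _ (hσ.mapsTo_closure hp)).comp p (hσ.contDiff.contDiffAt.of_le (by norm_cast))

lemma IsSquareSymmetry.nder_comp_of_contDiffAt (hσ : IsSquareSymmetry σ) {f : ℝ × ℝ → ℝ}
    (hf : ∀ p ∈ closure unitSq, ContDiffAt ℝ 1 f p) {p : ℝ × ℝ} (hp : p ∈ unitSqEdges) :
    nder (f ∘ σ) p = nder f (σ p) :=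
  hσ.nder_comp f hp
    ((hf _ (unitSqEdges_subset_closure (hσ.mapsTo_edges hp))).differentiableAt one_ne_zero)

lemma IsSquareSymmetry.bInt_nder_comp_mul (hσ : IsSquareSymmetry σ) {f : ℝ × ℝ → ℝ}
    (hf : ∀ p ∈ unitSqEdges, DifferentiableAt ℝ f p) (g : ℝ × ℝ → ℝ) :
    bInt (fun p => nder (f ∘ σ) p * g p) = bInt (fun p => nder f p * g (σ p)) := by
  refine (bInt_congr fun p hp => ?_).trans (hσ.bInt_comp _)
  simp [hσ.nder_comp f hp (hf _ (hσ.mapsTo_edges hp)), hσ.involutive p]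

lemma IsSquareSymmetry.nitscheBoundaryForm_nder_comp (hσ : IsSquareSymmetry σ)
    (hΛ : ∀ p ∈ unitSqEdges, DifferentiableAt ℝ Λ p)
    (hw : ∀ p ∈ unitSqEdges, DifferentiableAt ℝ w p)
    (hμ : ∀ p ∈ unitSqEdges, DifferentiableAt ℝ μ p) {v : ℝ × ℝ → ℝ} (hv : ContDiff ℝ 2 v) :
    nitscheBoundaryForm ε γ (nder (Λ ∘ σ)) (nder (w ∘ σ)) (nder (μ ∘ σ)) v =
      nitscheBoundaryForm ε γ (nder Λ) (nder w) (nder μ) (v ∘ σ) := by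
  have hnder : bInt (fun p => nder w p * nder v (σ p)) =
      bInt (fun p => nder w p * nder (v ∘ σ) p) :=
    bInt_congr fun p hp => by
      rw [hσ.nder_comp v hp ((hv.differentiable two_ne_zero) _)]
  simp only [nitscheBoundaryForm, hσ.bInt_nder_comp_mul hΛ, hσ.bInt_nder_comp_mul hw,
    hσ.bInt_nder_comp_mul hμ, hσ.lap_comp v hv, hnder, Function.comp_apply]

lemma IsSquareSymmetry.nitscheBoundaryForm_nder_comp_eq_zero (hσ : IsSquareSymmetry σ)
    (hΛ : ∀ p ∈ closure unitSq, ContDiffAt ℝ 1 Λ p) (hw : ∀ p ∈ closure unitSq, ContDiffAt ℝ 1 w p)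
    (hμ : ∀ p ∈ closure unitSq, ContDiffAt ℝ 1 μ p)
    (hform : ∀ v, ContDiff ℝ ∞ v → nitscheBoundaryForm ε γ (nder Λ) (nder w) (nder μ) v = 0) :
    ∀ v, ContDiff ℝ ∞ v →
      nitscheBoundaryForm ε γ (nder (Λ ∘ σ)) (nder (w ∘ σ)) (nder (μ ∘ σ)) v = 0 := by
  have hd : ∀ f : ℝ × ℝ → ℝ, (∀ p ∈ closure unitSq, ContDiffAt ℝ 1 f p) →
      ∀ p ∈ unitSqEdges, DifferentiableAt ℝ f p := fun f hf p hp =>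
    (hf p (unitSqEdges_subset_closure hp)).differentiableAt one_ne_zero
  intro v hv
  rw [hσ.nitscheBoundaryForm_nder_comp (hd _ hΛ) (hd _ hw) (hd _ hμ) (hv.of_le (by norm_cast))]
  exact hform _ (hv.comp hσ.contDiff)

end Symmetry

section BoundaryConditions

variable {ε γ : ℝ} {Λ w μ : ℝ × ℝ → ℝ}

lemma continuousOn_nder_left_edge {φ : ℝ × ℝ → ℝ}
    (hφ : ∀ p ∈ closure unitSq, ContDiffAt ℝ 1 φ p) :
    ContinuousOn (fun y => nder φ (0, y)) (Icc 0 1) := by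
  have hpdx : ContinuousOn (pdx φ) (closure unitSq) :=
    continuousOn_closure_unitSq_of_contDiffAt fun p hp =>
      contDiffAt_pdx (n := 0) (by simpa using hφ p hp)
  have hedge : Continuous fun y : ℝ => ((0:ℝ), y) := continuous_const.prodMk continuous_id
  refine ((hpdx.comp hedge.continuousOn fun y hy => ?_).neg).congr
    fun y _ => by simp [nder]
  rw [closure_unitSq]
  exact ⟨⟨le_rfl, zero_le_one⟩, hy⟩

lemma nder_eq_zero_on_left_edge (hε : ε ≠ 0) (hγ : γ ≠ 0)
    (hΛ : ∀ p ∈ closure unitSq, ContDiffAt ℝ 1 Λ p) (hw : ∀ p ∈ closure unitSq, ContDiffAt ℝ 1 w p)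
    (hμ : ∀ p ∈ closure unitSq, ContDiffAt ℝ 1 μ p)
    (hform : ∀ v, ContDiff ℝ ∞ v → nitscheBoundaryForm ε γ (nder Λ) (nder w) (nder μ) v = 0) :
    ∀ y ∈ Ioo (0:ℝ) 1, nder w (0, y) = 0 ∧ nder μ (0, y) = ε ^ 2 * nder Λ (0, y) :=
  left_edge_conditions_of_nitscheBoundaryForm_eq_zero hε hγ (continuousOn_nder_left_edge hΛ)
    (continuousOn_nder_left_edge hw) (continuousOn_nder_left_edge hμ) hform

lemma nder_eq_zero_on_vertical_edges (hε : ε ≠ 0) (hγ : γ ≠ 0)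
    (hΛ : ∀ p ∈ closure unitSq, ContDiffAt ℝ 1 Λ p) (hw : ∀ p ∈ closure unitSq, ContDiffAt ℝ 1 w p)
    (hμ : ∀ p ∈ closure unitSq, ContDiffAt ℝ 1 μ p)
    (hform : ∀ v, ContDiff ℝ ∞ v → nitscheBoundaryForm ε γ (nder Λ) (nder w) (nder μ) v = 0) :
    ∀ p ∈ ({0, 1} : Set ℝ) ×ˢ Ioo (0:ℝ) 1, nder w p = 0 ∧ nder μ p = ε ^ 2 * nder Λ p := by
  rintro ⟨x, y⟩ ⟨hx | hx, hy⟩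
  · obtain rfl : x = 0 := hx
    exact nder_eq_zero_on_left_edge hε hγ hΛ hw hμ hform y hy
  · obtain rfl : x = 1 := hx
    have hr := isSquareSymmetry_reflectX
    have hp : ((0:ℝ), y) ∈ unitSqEdges := Or.inl ⟨by simp, hy⟩
    have hright := nder_eq_zero_on_left_edge hε hγ (hr.contDiffAt_comp hΛ) (hr.contDiffAt_comp hw)
      (hr.contDiffAt_comp hμ) (hr.nitscheBoundaryForm_nder_comp_eq_zero hΛ hw hμ hform) y hy
    simpa [hr.nder_comp_of_contDiffAt hΛ hp, hr.nder_comp_of_contDiffAt hw hp,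
      hr.nder_comp_of_contDiffAt hμ hp, reflectX] using hright

theorem nder_eq_zero_of_nitscheBoundaryForm_eq_zero (hε : ε ≠ 0) (hγ : γ ≠ 0)
    (hΛ : ∀ p ∈ closure unitSq, ContDiffAt ℝ 1 Λ p) (hw : ∀ p ∈ closure unitSq, ContDiffAt ℝ 1 w p)
    (hμ : ∀ p ∈ closure unitSq, ContDiffAt ℝ 1 μ p)
    (hform : ∀ v, ContDiff ℝ ∞ v → nitscheBoundaryForm ε γ (nder Λ) (nder w) (nder μ) v = 0) :
    ∀ p ∈ unitSqEdges, nder w p = 0 ∧ nder μ p = ε ^ 2 * nder Λ p := by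
  rintro p (hp | ⟨hx, hy⟩)
  · exact nder_eq_zero_on_vertical_edges hε hγ hΛ hw hμ hform p hp
  · have hs := isSquareSymmetry_swap
    have hp : p.swap ∈ ({0, 1} : Set ℝ) ×ˢ Ioo (0:ℝ) 1 := ⟨hy, hx⟩
    have hhoriz := nder_eq_zero_on_vertical_edges hε hγ (hs.contDiffAt_comp hΛ)
      (hs.contDiffAt_comp hw) (hs.contDiffAt_comp hμ)
      (hs.nitscheBoundaryForm_nder_comp_eq_zero hΛ hw hμ hform) p.swap hp
    simpa [hs.nder_comp_of_contDiffAt hΛ (Or.inl hp), hs.nder_comp_of_contDiffAt hw (Or.inl hp),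
      hs.nder_comp_of_contDiffAt hμ (Or.inl hp)] using hhoriz

end BoundaryConditions

lemma zeroNormalDeriv_of_nder_eq_zero {φ : ℝ × ℝ → ℝ} (h : ∀ p ∈ unitSqEdges, nder φ p = 0) :
    ZeroNormalDeriv φ := by
  refine ⟨fun y hy => ⟨?_, ?_⟩, fun x hx => ⟨?_, ?_⟩⟩
  · simpa [nder] using h (0, y) (Or.inl ⟨by simp, hy⟩)
  · simpa [nder] using h (1, y) (Or.inl ⟨by simp, hy⟩)
  · simpa [nder, hx.1.ne', hx.2.ne] using h (x, 0) (Or.inr ⟨hx, by simp⟩)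
  · simpa [nder, hx.1.ne', hx.2.ne] using h (x, 1) (Or.inr ⟨hx, by simp⟩)

theorem nitsche_implies_cahn_hilliard_general (ε T γ : ℝ) (hε : 0 < ε) (hγ : 0 < γ)
    (u : ℝ → ℝ × ℝ → ℝ)
    (hreg : ∀ t : ℝ, ∃ s : Set (ℝ × ℝ),
      IsOpen s ∧ closure unitSq ⊆ s ∧ ContDiffOn ℝ 4 (u t) s)
    (hcont : Continuous fun q : ℝ × (ℝ × ℝ) => dtu u q.1 q.2)
    (hvar : ∀ t ∈ Icc (0:ℝ) T, ∀ v : ℝ × ℝ → ℝ, ContDiff ℝ (⊤ : ℕ∞) v →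
      (∫ p in unitSq, dtu u t p * v p) + ε^2 * a1 γ (u t) v +
        (∫ p in unitSq,
          (pdx (fun q => fDW (u t q)) p * pdx v p +
           pdy (fun q => fDW (u t q)) p * pdy v p)) = 0) :
    ∀ t ∈ Icc (0:ℝ) T,
      (∀ p ∈ unitSq,
        dtu u t p + ε^2 * lap (lap (u t)) p - lap (fun q => fDW (u t q)) p = 0) ∧
      ZeroNormalDeriv (u t) ∧
      ZeroNormalDeriv (fun q => -ε^2 * lap (u t) q + fDW (u t q)) := by
  intro t ht
  obtain ⟨s, hs, hcl, hu⟩ := hreg t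
  have hw : ∀ p ∈ closure unitSq, ContDiffAt ℝ 4 (u t) p := fun p hp =>
    hu.contDiffAt (hs.mem_nhds (hcl hp))
  have hf : ∀ p ∈ closure unitSq, ContDiffAt ℝ 2 (fun q => fDW (u t q)) p := fun p hp =>
    ((contDiff_id.pow 3).sub contDiff_id).contDiffAt.comp p ((hw p hp).of_le (by norm_num))
  have hΔw : ∀ p ∈ closure unitSq, ContDiffAt ℝ 2 (lap (u t)) p := fun p hp =>
    contDiffAt_lap (n := 2) (by exact_mod_cast hw p hp)
  have hρ : Continuous (dtu u t) := hcont.comp (continuous_const.prodMk continuous_id)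
  obtain ⟨hpde, hform⟩ := eqOn_zero_and_nitscheBoundaryForm_eq_zero
    ((hρ.continuousOn.add (continuousOn_const.mul (continuousOn_lap hΔw))).sub
      (continuousOn_lap hf) |>.mono subset_closure)
    fun v hv => (setIntegral_mul_add_a1_add_grad_eq hρ.continuousOn hw hf
      (hv.of_le (by norm_cast))).symm.trans (hvar t ht v hv)
  have hbd := nder_eq_zero_of_nitscheBoundaryForm_eq_zero hε.ne' hγ.ne'
    (fun p hp => (hΔw p hp).of_le one_le_two) (fun p hp => (hw p hp).of_le (by norm_num))
    (fun p hp => (hf p hp).of_le one_le_two) hform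
  refine ⟨fun p hp => hpde hp, zeroNormalDeriv_of_nder_eq_zero fun p hp => (hbd p hp).1,
    zeroNormalDeriv_of_nder_eq_zero fun p hp => ?_⟩
  have hp' := unitSqEdges_subset_closure hp
  rw [nder_const_mul_add _ ((hΔw p hp').differentiableAt two_ne_zero)
    ((hf p hp').differentiableAt two_ne_zero), (hbd p hp).2]
  ring

/-- **Consistency of the Nitsche variational formulation.** Let `γ > 0`. If `u(t,·)`
is `C⁴` on a neighborhood of `closure Ω` for each `t`, `∂ₜu` is continuous, and the
Nitsche variational identity
`∫_Ω ∂ₜu v + ε² a₁(u(t,·), v) + ∫_Ω ∇f(u(t,·))·∇v = 0`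
holds for every `t ∈ [0,T]` and every smooth `v`, then for every `t ∈ [0,T]`: `u`
satisfies the Cahn–Hilliard equation `∂ₜu + ε²Δ²u − Δf(u) = 0` at every point of `Ω`,
and `∂ₙu = 0` and `∂ₙ(−ε²Δu + f(u)) = 0` on the four open edges of `∂Ω`. -/
theorem nitsche_implies_cahn_hilliard (ε T γ : ℝ) (hε : 0 < ε) (hT : 0 < T) (hγ : 0 < γ)
    (u : ℝ → ℝ × ℝ → ℝ)
    (hreg : ∀ t : ℝ, ∃ s : Set (ℝ × ℝ),
      IsOpen s ∧ closure unitSq ⊆ s ∧ ContDiffOn ℝ 4 (u t) s)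
    (hcont : Continuous fun q : ℝ × (ℝ × ℝ) => dtu u q.1 q.2)
    (hvar : ∀ t ∈ Icc (0:ℝ) T, ∀ v : ℝ × ℝ → ℝ, ContDiff ℝ (⊤ : ℕ∞) v →
      (∫ p in unitSq, dtu u t p * v p) + ε^2 * a1 γ (u t) v +
        (∫ p in unitSq,
          (pdx (fun q => fDW (u t q)) p * pdx v p +
           pdy (fun q => fDW (u t q)) p * pdy v p)) = 0) :
    ∀ t ∈ Icc (0:ℝ) T,
      (∀ p ∈ unitSq,
        dtu u t p + ε^2 * lap (lap (u t)) p - lap (fun q => fDW (u t q)) p = 0) ∧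
      ZeroNormalDeriv (u t) ∧
      ZeroNormalDeriv (fun q => -ε^2 * lap (u t) q + fDW (u t q)) :=
  nitsche_implies_cahn_hilliard_general ε T γ hε hγ u hreg hcont hvar
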